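/- arXiv:1007.2120 — 2 statements merged into one kernel-verified Lean document; each statement's English description precedes it below -/
import Mathlib

section
/- If X_0, ..., X_k are independent Exponential(1) random variables, then the probability that X_0, ..., X_k form a k-frame is at least 2^{-(k+2)^2}. -/
/-!
Confine `X i` to the window `(3⁻ⁱ, (4/3)·3⁻ⁱ]`. Consecutive windows are spaced so that any choice of
points in them is a frame, and each window has Exponential(1) mass at least `3⁻ⁱ/3 · (1 - 3⁻ⁱ/3)⁴`,
i.e. at least `1/16` for `i = 0` and `1/(8·4ⁱ)` for `i ≥ 1`. By independence the probability of
landing in all windows is the product of these masses, which is at least `2^{-(k+2)²}` because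
`2⁴ · ∏_{i=1}^k 8·4ⁱ = 2^{(k+2)²}`.
-/

open MeasureTheory ProbabilityTheory Set Real

lemma le_exp_neg_sub_exp_neg {c : ℝ} (hc₀ : 0 ≤ c) (hc₃ : c ≤ 3) :
    c / 3 * (1 - c / 3) ^ 4 ≤ exp (-c) - exp (-(4 / 3 * c)) := by
  have hsplit : exp (-c) - exp (-(4 / 3 * c)) = exp (-(c / 3)) ^ 4 * (exp (c / 3) - 1) := by
    rw [← exp_nat_mul, mul_sub, ← exp_add]
    ring_nf
  have hpow : (1 - c / 3) ^ 4 ≤ exp (-(c / 3)) ^ 4 := by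
    gcongr
    · linarith
    · linarith [add_one_le_exp (-(c / 3))]
  rw [hsplit, mul_comm (c / 3)]
  gcongr
  linarith [add_one_le_exp (c / 3)]

lemma ofReal_exp_neg_sub_exp_neg_le_measure {Ω : Type*} [MeasurableSpace Ω] {μ : Measure Ω}
    {X : Ω → ℝ} (hX : ∀ x : ℝ, 0 ≤ x → μ {ω | X ω ≤ x} = ENNReal.ofReal (1 - exp (-x)))
    {a b : ℝ} (ha : 0 ≤ a) (hab : a ≤ b) :
    ENNReal.ofReal (exp (-a) - exp (-b)) ≤ μ (X ⁻¹' Ioc a b) := by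
  have hcover : μ {ω | X ω ≤ b} ≤ μ (X ⁻¹' Ioc a b) + μ {ω | X ω ≤ a} :=
    (measure_mono fun ω (hω : X ω ≤ b) ↦ (lt_or_ge a (X ω)).imp (⟨·, hω⟩) id).trans
      (measure_union_le _ _)
  rw [hX b (ha.trans hab), hX a ha] at hcover
  rw [show exp (-a) - exp (-b) = (1 - exp (-b)) - (1 - exp (-a)) by ring,
    ENNReal.ofReal_sub _ (by linarith [exp_le_one_iff.mpr (neg_nonpos.mpr ha)])]
  exact tsub_le_iff_right.mpr hcover

lemma inv_two_pow_sq_le_prod_range (f : ℕ → ℝ) (h₀ : (2 ^ 4 : ℝ)⁻¹ ≤ f 0)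
    (hsucc : ∀ n, (8 * 4 ^ (n + 1) : ℝ)⁻¹ ≤ f (n + 1)) (k : ℕ) :
    ((2 : ℝ) ^ ((k + 2) ^ 2))⁻¹ ≤ ∏ i ∈ Finset.range (k + 1), f i := by
  induction k with
  | zero => simpa using h₀
  | succ k ih =>
    have hpow : (2 : ℝ) ^ ((k + 1 + 2) ^ 2) = 2 ^ ((k + 2) ^ 2) * (8 * 4 ^ (k + 1)) := by
      rw [show (8 : ℝ) = 2 ^ 3 by norm_num, show (4 : ℝ) = 2 ^ 2 by norm_num, ← pow_mul,
        ← pow_add, ← pow_add]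
      ring_nf
    rw [Finset.prod_range_succ, hpow, mul_inv]
    exact mul_le_mul ih (hsucc k) (by positivity) ((inv_nonneg.mpr (by positivity)).trans ih)

def frameWindow (n : ℕ) : Set ℝ := Ioc (3⁻¹ ^ n) (4 / 3 * 3⁻¹ ^ n)

lemma isFrame_of_forall_mem_frameWindow {k : ℕ} {x : Fin (k + 1) → ℝ}
    (hx : ∀ i : Fin (k + 1), x i ∈ frameWindow i) :
    (1 ≤ x 0 ∧ x 0 ≤ 2) ∧
      ∀ i j : Fin (k + 1), (i : ℕ) + 1 = j → x i / 4 ≤ x j ∧ x j ≤ x i / 2 := by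
  refine ⟨?_, ?_⟩
  · have h0 := hx 0
    simp only [frameWindow, Fin.val_zero, pow_zero, mem_Ioc] at h0
    constructor <;> linarith
  intro i j hij
  have hi := hx i
  have hj := hx j
  rw [frameWindow, ← hij, pow_succ] at hj
  have hc : (0 : ℝ) < 3⁻¹ ^ (i : ℕ) := by positivity
  exact ⟨by linarith [hi.2, hj.1], by linarith [hi.1, hj.2]⟩

noncomputable def frameWindowMass (n : ℕ) : ℝ := exp (-3⁻¹ ^ n) - exp (-(4 / 3 * 3⁻¹ ^ n))

lemma le_frameWindowMass_zero : (2 ^ 4 : ℝ)⁻¹ ≤ frameWindowMass 0 := by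
  have h := le_exp_neg_sub_exp_neg (c := 1) zero_le_one (by norm_num)
  simp only [frameWindowMass, pow_zero]
  linarith

lemma le_frameWindowMass_succ (n : ℕ) : (8 * 4 ^ (n + 1) : ℝ)⁻¹ ≤ frameWindowMass (n + 1) := by
  set c : ℝ := 3⁻¹ ^ (n + 1)
  have hc₀ : 0 ≤ c := by positivity
  have hc : c ≤ 3⁻¹ := pow_le_of_le_one (by norm_num) (by norm_num) n.succ_ne_zero
  have hmass := le_exp_neg_sub_exp_neg hc₀ (by linarith)
  have hfactor : (3 / 8 : ℝ) ≤ (1 - c / 3) ^ 4 :=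
    le_trans (by norm_num)
      (pow_le_pow_left₀ (by norm_num) (by linarith : (8 / 9 : ℝ) ≤ 1 - c / 3) 4)
  have h4 : (4⁻¹ : ℝ) ^ (n + 1) ≤ c := pow_le_pow_left₀ (by norm_num) (by norm_num) _
  rw [mul_inv, ← inv_pow]
  calc 8⁻¹ * 4⁻¹ ^ (n + 1) ≤ c / 3 * (3 / 8) := by linarith
    _ ≤ c / 3 * (1 - c / 3) ^ 4 := by gcongr
    _ ≤ frameWindowMass (n + 1) := hmass

lemma frameWindowMass_pos (n : ℕ) : 0 < frameWindowMass n := by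
  rw [frameWindowMass, sub_pos, exp_lt_exp]
  have : (0 : ℝ) < 3⁻¹ ^ n := by positivity
  linarith

theorem stmt_5_general {Ω : Type*} [MeasurableSpace Ω] (μ : Measure Ω)
    (k : ℕ) (X : Fin (k + 1) → Ω → ℝ)
    (hindep : iIndepFun X μ)
    (hX : ∀ i, ∀ x : ℝ, 0 ≤ x → μ {ω | X i ω ≤ x} = ENNReal.ofReal (1 - Real.exp (-x))) :
    μ {ω | (1 ≤ X 0 ω ∧ X 0 ω ≤ 2) ∧
        ∀ i : Fin (k + 1), ∀ j : Fin (k + 1), (i:ℕ) + 1 = (j:ℕ) →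
          X i ω / 4 ≤ X j ω ∧ X j ω ≤ X i ω / 2} ≥
      ENNReal.ofReal (((2:ℝ) ^ ((k + 2) ^ 2))⁻¹) := by
  have hwindow (i : Fin (k + 1)) :
      ENNReal.ofReal (frameWindowMass i) ≤ μ (X i ⁻¹' frameWindow i) := by
    have hc : (0 : ℝ) < 3⁻¹ ^ (i : ℕ) := by positivity
    exact ofReal_exp_neg_sub_exp_neg_le_measure (hX i) hc.le (by linarith)
  calc ENNReal.ofReal (((2:ℝ) ^ ((k + 2) ^ 2))⁻¹)
      ≤ ENNReal.ofReal (∏ i ∈ Finset.range (k + 1), frameWindowMass i) :=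
        ENNReal.ofReal_le_ofReal <|
          inv_two_pow_sq_le_prod_range _ le_frameWindowMass_zero le_frameWindowMass_succ k
    _ = ∏ i : Fin (k + 1), ENNReal.ofReal (frameWindowMass i) := by
        rw [← Fin.prod_univ_eq_prod_range]
        exact ENNReal.ofReal_prod_of_nonneg fun i _ ↦ (frameWindowMass_pos i).le
    _ ≤ ∏ i, μ (X i ⁻¹' frameWindow i) := Finset.prod_le_prod' fun i _ ↦ hwindow i
    _ = μ (⋂ i, X i ⁻¹' frameWindow i) :=
        (hindep.meas_iInter fun i ↦ ⟨frameWindow i, measurableSet_Ioc, rfl⟩).symm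
    _ ≤ _ := measure_mono fun ω hω ↦
        isFrame_of_forall_mem_frameWindow (x := fun i ↦ X i ω) (mem_iInter.mp hω)

/-- If `X 0, …, X k` are independent Exponential(1) random variables, then the
probability that they form a `k`-frame is at least `2^{-(k+2)²}`. -/
theorem stmt_5 {Ω : Type*} [MeasurableSpace Ω] (μ : Measure Ω) [IsProbabilityMeasure μ]
    (k : ℕ) (X : Fin (k + 1) → Ω → ℝ)
    (hindep : iIndepFun X μ)
    (hX : ∀ i, ∀ x : ℝ, 0 ≤ x → μ {ω | X i ω ≤ x} = ENNReal.ofReal (1 - Real.exp (-x))) :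
    μ {ω | (1 ≤ X 0 ω ∧ X 0 ω ≤ 2) ∧
        ∀ i : Fin (k + 1), ∀ j : Fin (k + 1), (i:ℕ) + 1 = (j:ℕ) →
          X i ω / 4 ≤ X j ω ∧ X j ω ≤ X i ω / 2} ≥
      ENNReal.ofReal (((2:ℝ) ^ ((k + 2) ^ 2))⁻¹) :=
  stmt_5_general μ k X hindep hX
end

section
/- Let X_0, ..., X_k form a k-frame (1 ≤ X_0 ≤ 2 and X_{i-1}/4 ≤ X_i ≤ X_{i-1}/2 for 1 ≤ i ≤ k), and define points x_i = ∑_{j=0}^{i-1} X_j for i = 1, ..., k+1. Then for every i ∈ {1,...,k}, x_{k+1} - x_i ≤ X_{i-1} = x_i - x_{i-1}, i.e., x_{k+1} lies within the broadcast interval of each x_i, so the interference at x_{k+1} is at least k. -/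
/-!
Since each gap is at most half the previous one, the gaps after `X (i-1)` telescope:
`X i + ⋯ + X k ≤ X (i-1) - X k`, and the lower bound `X (i-1) / 4 ≤ X i` keeps every gap,
in particular `X k`, nonnegative.
-/

open Finset

lemma nonneg_of_quarter_le {X : ℕ → ℝ} {k : ℕ} (h0 : 0 ≤ X 0)
    (hstep : ∀ j < k, X j / 4 ≤ X (j + 1)) : 0 ≤ X k := by
  induction k with
  | zero => exact h0
  | succ k ih =>
    have := ih fun j hj => hstep j (by omega)
    linarith [hstep k (by omega)]

lemma sum_Ico_add_le_of_two_mul_le {X : ℕ → ℝ} {i k : ℕ} (hik : i ≤ k)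
    (hhalf : ∀ j, i ≤ j → j < k → 2 * X (j + 1) ≤ X j) :
    ∑ j ∈ Ico (i + 1) (k + 1), X j + X k ≤ X i := by
  induction k, hik using Nat.le_induction with
  | base => simp
  | succ k hik ih =>
    have hprev := ih fun j hij hjk => hhalf j hij (by omega)
    rw [sum_Ico_succ_top (by omega)]
    linarith [hhalf k hik (by omega)]

/-- Let `X 0, …, X k` form a `k`-frame and define the points
`x i = ∑_{j=0}^{i-1} X j`.  Then for every `i ∈ {1,…,k}` we have
`x (k+1) - x i ≤ X (i-1) = x i - x (i-1)`: the point `x (k+1)` lies within the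
broadcast interval of each `x i`, so the interference at `x (k+1)` is at least `k`. -/
theorem stmt_16 (k : ℕ) (X : ℕ → ℝ)
    (h0 : 1 ≤ X 0 ∧ X 0 ≤ 2)
    (hstep : ∀ i : ℕ, 1 ≤ i → i ≤ k → X (i - 1) / 4 ≤ X i ∧ X i ≤ X (i - 1) / 2)
    (x : ℕ → ℝ) (hx : ∀ i, x i = ∑ j ∈ Finset.range i, X j) :
    ∀ i : ℕ, 1 ≤ i → i ≤ k →
      x (k + 1) - x i ≤ X (i - 1) ∧ X (i - 1) = x i - x (i - 1) := by
  have hstep' : ∀ j < k, X j / 4 ≤ X (j + 1) ∧ X (j + 1) ≤ X j / 2 := fun j hj => by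
    simpa using hstep (j + 1) (by omega) hj
  have hXk : 0 ≤ X k := nonneg_of_quarter_le (by linarith [h0.1]) fun j hj => (hstep' j hj).1
  intro i hi hik
  obtain ⟨i, rfl⟩ : ∃ j, i = j + 1 := ⟨i - 1, by omega⟩
  rw [Nat.add_sub_cancel]
  constructor
  · have htail := sum_Ico_add_le_of_two_mul_le (X := X) (i := i) (k := k) (by omega)
      fun j _ hj => by linarith [(hstep' j hj).2]
    rw [hx, hx, ← sum_Ico_eq_sub _ (by omega)]
    linarith
  · rw [hx, hx, sum_range_succ]
    ring
end
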